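/- arXiv:2510.02229 — 6 statements merged into one kernel-verified Lean document; each statement's English description precedes it below -/
import Mathlib

section
/- Let k be a field of characteristic 0 and let n ≥ 1 be a natural number. Let A := FreeAlgebra k (Fin n) be the free unital associative k-algebra on generators x_0, …, x_{n−1}, and let B := FreeAlgebra k (Fin 2 ⊕ Fin n) be the free unital associative k-algebra on generators u := ι(Sum.inl 0), v := ι(Sum.inl 1), and x_i := ι(Sum.inr i). Let I be the two-sided ideal of B generated by the single element u*v − v*u − x_0, and let π : B → B ⧸ I be the quotient ring homomorphism. Then the k-algebra homomorphism A → B ⧸ I determined (via the universal property of the free algebra) by sending each generator x_i of A to π(x_i) is injective. -/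
/-- Adjoining the relation `u*v - v*u = x₀` (i.e. quotienting the free associative algebra
`B` on `u, v, x₀, …, x_{n-1}` by the two-sided ideal generated by `u*v - v*u - x₀`) creates
no new relations among the generators `x₀, …, x_{n-1}`: the canonical `k`-algebra map from
the free associative algebra `A` on `x₀, …, x_{n-1}` is injective. -/
theorem free_associative_bracket_generator_injective
    (k : Type) [Field k] [CharZero k] (n : ℕ) (hn : 1 ≤ n) :
    let u : FreeAlgebra k (Fin 2 ⊕ Fin n) := FreeAlgebra.ι k (Sum.inl 0)
    let v : FreeAlgebra k (Fin 2 ⊕ Fin n) := FreeAlgebra.ι k (Sum.inl 1)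
    let x0 : FreeAlgebra k (Fin 2 ⊕ Fin n) := FreeAlgebra.ι k (Sum.inr ⟨0, hn⟩)
    let I : TwoSidedIdeal (FreeAlgebra k (Fin 2 ⊕ Fin n)) :=
      TwoSidedIdeal.span {u * v - v * u - x0}
    let π : FreeAlgebra k (Fin 2 ⊕ Fin n) →+* I.ringCon.Quotient := I.ringCon.mk'
    Function.Injective
      ⇑((FreeAlgebra.lift k fun i : Fin n => π (FreeAlgebra.ι k (Sum.inr i))) :
        FreeAlgebra k (Fin n) →ₐ[k] I.ringCon.Quotient) := by
  intro u v x0 I π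
  classical
  have hu : u = FreeAlgebra.ι k (Sum.inl 0) := rfl
  have hv : v = FreeAlgebra.ι k (Sum.inl 1) := rfl
  have hx : x0 = FreeAlgebra.ι k (Sum.inr ⟨0, hn⟩) := rfl
  have hI : I = TwoSidedIdeal.span {u * v - v * u - x0} := rfl
  -- the canonical map from the free algebra on `Fin n`
  set F : FreeAlgebra k (Fin n) →ₐ[k] FreeAlgebra k (Fin 2 ⊕ Fin n) :=
    FreeAlgebra.lift k (fun i : Fin n => FreeAlgebra.ι k (Sum.inr i)) with hF
  -- x₀ inside the small free algebra
  set y0 : FreeAlgebra k (Fin n) := FreeAlgebra.ι k (⟨0, hn⟩ : Fin n) with hy0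
  -- the representation of the big free algebra on polynomials
  set D : Module.End k (Polynomial (FreeAlgebra k (Fin n))) :=
    (Polynomial.derivative :
      Polynomial (FreeAlgebra k (Fin n)) →ₗ[FreeAlgebra k (Fin n)]
        Polynomial (FreeAlgebra k (Fin n))).restrictScalars k with hD
  set φ : FreeAlgebra k (Fin 2 ⊕ Fin n) →ₐ[k]
      Module.End k (Polynomial (FreeAlgebra k (Fin n))) :=
    FreeAlgebra.lift k (Sum.elim
      (fun j : Fin 2 => if j = 0 then D else
        Algebra.lmul k (Polynomial (FreeAlgebra k (Fin n))) (Polynomial.C y0 * Polynomial.X))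
      (fun i : Fin n => Algebra.lmul k (Polynomial (FreeAlgebra k (Fin n)))
        (Polynomial.C (FreeAlgebra.ι k i))))
    with hφ
  have hφu : φ u = D := by
    rw [hu, hφ, FreeAlgebra.lift_ι_apply]; rfl
  have hφv : φ v = Algebra.lmul k (Polynomial (FreeAlgebra k (Fin n)))
      (Polynomial.C y0 * Polynomial.X) := by
    rw [hv, hφ, FreeAlgebra.lift_ι_apply]; rfl
  have hφx0 : φ x0 = Algebra.lmul k (Polynomial (FreeAlgebra k (Fin n)))
      (Polynomial.C y0) := by
    rw [hx, hφ, FreeAlgebra.lift_ι_apply]; rfl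
  -- the relation is killed
  have hrel : φ (u * v - v * u - x0) = 0 := by
    rw [map_sub, map_sub, map_mul, map_mul, hφu, hφv, hφx0]
    refine LinearMap.ext fun p => ?_
    simp only [LinearMap.sub_apply, Module.End.mul_apply, LinearMap.zero_apply,
      Algebra.coe_lmul_eq_mul, LinearMap.mul_apply', hD, LinearMap.coe_restrictScalars]
    rw [sub_eq_zero, sub_eq_iff_eq_add]
    rw [show ((Polynomial.derivative :
        Polynomial (FreeAlgebra k (Fin n)) →ₗ[FreeAlgebra k (Fin n)]
          Polynomial (FreeAlgebra k (Fin n))) :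
      Polynomial (FreeAlgebra k (Fin n)) → Polynomial (FreeAlgebra k (Fin n))) =
        Polynomial.derivative from rfl]
    rw [Polynomial.derivative_mul, Polynomial.derivative_C_mul_X]
  -- span {rel} ≤ ker φ
  have hspan : ∀ z : FreeAlgebra k (Fin 2 ⊕ Fin n), z ∈ I → φ z = 0 := by
    intro z hz
    rw [hI, TwoSidedIdeal.mem_span_iff] at hz
    have key := hz (TwoSidedIdeal.ker φ) (by
      intro w hw
      rw [Set.mem_singleton_iff] at hw
      subst hw
      exact (TwoSidedIdeal.mem_ker φ).mpr hrel)
    exact (TwoSidedIdeal.mem_ker φ).mp key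
  -- the given map equals πₐ ∘ F
  set πₐ : FreeAlgebra k (Fin 2 ⊕ Fin n) →ₐ[k] I.ringCon.Quotient :=
    { π with commutes' := fun r => rfl } with hπₐ
  have hg : ((FreeAlgebra.lift k fun i : Fin n => π (FreeAlgebra.ι k (Sum.inr i))) :
      FreeAlgebra k (Fin n) →ₐ[k] I.ringCon.Quotient) = πₐ.comp F := by
    apply FreeAlgebra.hom_ext
    funext i
    simp [πₐ, hF, FreeAlgebra.lift_ι_apply]
  -- φ ∘ F is injective
  have hΦ : φ.comp F = (Algebra.lmul k (Polynomial (FreeAlgebra k (Fin n)))).comp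
      Polynomial.CAlgHom := by
    apply FreeAlgebra.hom_ext
    funext i
    simp only [Function.comp_apply, AlgHom.comp_apply, hF, hφ, FreeAlgebra.lift_ι_apply]
    rfl
  have hΦinj : Function.Injective ⇑(φ.comp F) := by
    intro a b hab
    rw [hΦ] at hab
    simp only [AlgHom.comp_apply] at hab
    have h1 := congrArg (fun e : Module.End k (Polynomial (FreeAlgebra k (Fin n))) => e 1) hab
    simp only [Algebra.coe_lmul_eq_mul, LinearMap.mul_apply', Polynomial.CAlgHom_apply,
      mul_one] at h1
    exact Polynomial.C_injective h1
  -- finish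
  intro a b hab
  rw [hg] at hab
  apply hΦinj
  have hrel' : I.ringCon (F a) (F b) := by
    have hq : (F a : I.ringCon.Quotient) = (F b : I.ringCon.Quotient) := hab
    exact I.ringCon.eq.mp hq
  have hmem : F a - F b ∈ I := (TwoSidedIdeal.rel_iff I _ _).mp hrel'
  have hz : φ (F a - F b) = 0 := hspan _ hmem
  rw [map_sub, sub_eq_zero] at hz
  simpa using hz
end

section
/- Let k be a field of characteristic 0 and let n ≥ 1 be a natural number. Let L := FreeLieAlgebra k (Fin n) be the free Lie algebra over k on generators x_0, …, x_{n−1}, and let L' := FreeLieAlgebra k (Fin 2 ⊕ Fin n) be the free Lie algebra over k on generators u := of(Sum.inl 0), v := of(Sum.inl 1), and x_i := of(Sum.inr i). Let I be the Lie ideal of L' generated by the single element ⁅u, v⁆ − x_0, and let π : L' → L' ⧸ I be the quotient map of Lie algebras. Then the Lie algebra homomorphism L → L' ⧸ I determined (via the universal property of the free Lie algebra) by sending each generator x_i of L to π(x_i) is injective. -/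
noncomputable section FreeLieBracketAux

open FreeLieAlgebra

variable (k : Type) [Field k] (n : ℕ)

/-- Dual-numbers version of the free Lie algebra: pairs `(a, x)` thought of as `a + ε x`. -/
def DLie : Type := FreeLieAlgebra k (Fin n) × FreeLieAlgebra k (Fin n)

instance : AddCommGroup (DLie k n) := inferInstanceAs (AddCommGroup (_ × _))
instance : Module k (DLie k n) := inferInstanceAs (Module k (_ × _))

instance : Bracket (DLie k n) (DLie k n) :=
  ⟨fun p q => (⁅p.1, q.1⁆, ⁅p.1, q.2⁆ + ⁅p.2, q.1⁆)⟩

instance : LieRing (DLie k n) :=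
  { (inferInstance : AddCommGroup (DLie k n)),
    (inferInstance : Bracket (DLie k n) (DLie k n)) with
    add_lie := fun p q r => by
      refine Prod.ext ?_ ?_
      · show ⁅p.1 + q.1, r.1⁆ = ⁅p.1, r.1⁆ + ⁅q.1, r.1⁆
        rw [add_lie]
      · show ⁅p.1 + q.1, r.2⁆ + ⁅p.2 + q.2, r.1⁆ =
          (⁅p.1, r.2⁆ + ⁅p.2, r.1⁆) + (⁅q.1, r.2⁆ + ⁅q.2, r.1⁆)
        rw [add_lie, add_lie]; abel
    lie_add := fun p q r => by
      refine Prod.ext ?_ ?_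
      · show ⁅p.1, q.1 + r.1⁆ = ⁅p.1, q.1⁆ + ⁅p.1, r.1⁆
        rw [lie_add]
      · show ⁅p.1, q.2 + r.2⁆ + ⁅p.2, q.1 + r.1⁆ =
          (⁅p.1, q.2⁆ + ⁅p.2, q.1⁆) + (⁅p.1, r.2⁆ + ⁅p.2, r.1⁆)
        rw [lie_add, lie_add]; abel
    lie_self := fun p => by
      refine Prod.ext ?_ ?_
      · show ⁅p.1, p.1⁆ = 0
        rw [lie_self]
      · show ⁅p.1, p.2⁆ + ⁅p.2, p.1⁆ = 0
        rw [← lie_skew p.1 p.2]; exact neg_add_cancel _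
    leibniz_lie := fun p q r => by
      refine Prod.ext ?_ ?_
      · show ⁅p.1, ⁅q.1, r.1⁆⁆ = ⁅⁅p.1, q.1⁆, r.1⁆ + ⁅q.1, ⁅p.1, r.1⁆⁆
        rw [leibniz_lie]
      · show ⁅p.1, ⁅q.1, r.2⁆ + ⁅q.2, r.1⁆⁆ + ⁅p.2, ⁅q.1, r.1⁆⁆ =
          (⁅⁅p.1, q.1⁆, r.2⁆ + ⁅⁅p.1, q.2⁆ + ⁅p.2, q.1⁆, r.1⁆) +
          (⁅q.1, ⁅p.1, r.2⁆ + ⁅p.2, r.1⁆⁆ + ⁅q.2, ⁅p.1, r.1⁆⁆)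
        simp only [lie_add, add_lie, lie_lie]
        abel }

instance : LieAlgebra k (DLie k n) :=
  { lie_smul := fun t p q => by
      refine Prod.ext ?_ ?_
      · show ⁅p.1, t • q.1⁆ = t • ⁅p.1, q.1⁆
        rw [LieAlgebra.lie_smul]
      · show ⁅p.1, t • q.2⁆ + ⁅p.2, t • q.1⁆ = t • (⁅p.1, q.2⁆ + ⁅p.2, q.1⁆)
        rw [LieAlgebra.lie_smul, LieAlgebra.lie_smul, smul_add] }

/-- Projection onto the first component as a Lie algebra hom. -/
def DLie.fstHom : DLie k n →ₗ⁅k⁆ FreeLieAlgebra k (Fin n) where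
  toFun p := p.1
  map_add' _ _ := rfl
  map_smul' _ _ := rfl
  map_lie' := rfl

/-- The hom `x ↦ x + ε d x` defining the derivation `d` with `d xᵢ = xᵢ` if `i = 0` else `0`. -/
def PhiD : FreeLieAlgebra k (Fin n) →ₗ⁅k⁆ DLie k n :=
  FreeLieAlgebra.lift k fun i =>
    ((FreeLieAlgebra.of k i, if (i : ℕ) = 0 then FreeLieAlgebra.of k i else 0) : DLie k n)

lemma PhiD_fst (y : FreeLieAlgebra k (Fin n)) : (PhiD k n y).1 = y := by
  have h : (DLie.fstHom k n).comp (PhiD k n) = LieHom.id := by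
    ext i
    simp only [LieHom.comp_apply, PhiD, lift_of_apply, LieHom.id_apply]
    exact congrArg Prod.fst (lift_of_apply (R := k) (L := DLie k n) _ i)
  exact LieHom.congr_fun h y

/-- The derivation `d`. -/
def dMap : FreeLieAlgebra k (Fin n) →ₗ[k] FreeLieAlgebra k (Fin n) where
  toFun y := (PhiD k n y).2
  map_add' a b := by
    show (PhiD k n (a + b)).2 = (PhiD k n a).2 + (PhiD k n b).2
    rw [map_add]; rfl
  map_smul' t a := by
    show (PhiD k n (t • a)).2 = t • (PhiD k n a).2
    rw [map_smul]; rfl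

lemma dMap_lie (a b : FreeLieAlgebra k (Fin n)) :
    dMap k n ⁅a, b⁆ = ⁅a, dMap k n b⁆ + ⁅dMap k n a, b⁆ := by
  have h := (PhiD k n).map_lie (x := a) (y := b)
  have h2 := congrArg Prod.snd h
  show (PhiD k n ⁅a, b⁆).2 = _
  rw [h2]
  show ⁅(PhiD k n a).1, (PhiD k n b).2⁆ + ⁅(PhiD k n a).2, (PhiD k n b).1⁆ = _
  rw [PhiD_fst, PhiD_fst]
  rfl

lemma dMap_of (i : Fin n) :
    dMap k n (FreeLieAlgebra.of k i) = if (i : ℕ) = 0 then FreeLieAlgebra.of k i else 0 := by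
  show (PhiD k n (FreeLieAlgebra.of k i)).2 = _
  exact congrArg Prod.snd (lift_of_apply (R := k) (L := DLie k n) _ i)

/-- The extension `L ⊕ k·D` where `D` acts on `L` as the derivation `d`. -/
def ExtL : Type := FreeLieAlgebra k (Fin n) × k

instance : AddCommGroup (ExtL k n) := inferInstanceAs (AddCommGroup (_ × _))
instance : Module k (ExtL k n) := inferInstanceAs (Module k (_ × _))

instance : Bracket (ExtL k n) (ExtL k n) :=
  ⟨fun p q => (⁅p.1, q.1⁆ + p.2 • dMap k n q.1 - q.2 • dMap k n p.1, 0)⟩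

/-- The key Leibniz computation in `L`-land. -/
lemma extL_leibniz_aux (l m w : FreeLieAlgebra k (Fin n)) (a b c : k) :
    ⁅l, ⁅m, w⁆ + b • dMap k n w - c • dMap k n m⁆ +
      a • dMap k n (⁅m, w⁆ + b • dMap k n w - c • dMap k n m) - (0 : k) • dMap k n l =
    (⁅⁅l, m⁆ + a • dMap k n m - b • dMap k n l, w⁆ +
        (0 : k) • dMap k n w - c • dMap k n (⁅l, m⁆ + a • dMap k n m - b • dMap k n l)) +
    (⁅m, ⁅l, w⁆ + a • dMap k n w - c • dMap k n l⁆ +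
        b • dMap k n (⁅l, w⁆ + a • dMap k n w - c • dMap k n l) - (0 : k) • dMap k n m) := by
  simp only [zero_smul, sub_zero, map_add, map_sub, map_smul, dMap_lie,
    lie_add, add_lie, lie_sub, sub_lie, LieAlgebra.lie_smul, smul_lie, smul_add, smul_sub,
    smul_smul, lie_lie]
  rw [← lie_skew m (dMap k n l)]
  module

instance : LieRing (ExtL k n) :=
  { (inferInstance : AddCommGroup (ExtL k n)),
    (inferInstance : Bracket (ExtL k n) (ExtL k n)) with
    add_lie := fun p q r => by
      refine Prod.ext ?_ ?_
      · show ⁅p.1 + q.1, r.1⁆ + (p.2 + q.2) • dMap k n r.1 - r.2 • dMap k n (p.1 + q.1) =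
          (⁅p.1, r.1⁆ + p.2 • dMap k n r.1 - r.2 • dMap k n p.1) +
          (⁅q.1, r.1⁆ + q.2 • dMap k n r.1 - r.2 • dMap k n q.1)
        rw [add_lie, add_smul, map_add, smul_add]; abel
      · show (0 : k) = 0 + 0
        rw [add_zero]
    lie_add := fun p q r => by
      refine Prod.ext ?_ ?_
      · show ⁅p.1, q.1 + r.1⁆ + p.2 • dMap k n (q.1 + r.1) - (q.2 + r.2) • dMap k n p.1 =
          (⁅p.1, q.1⁆ + p.2 • dMap k n q.1 - q.2 • dMap k n p.1) +
          (⁅p.1, r.1⁆ + p.2 • dMap k n r.1 - r.2 • dMap k n p.1)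
        rw [lie_add, add_smul, map_add, smul_add]; abel
      · show (0 : k) = 0 + 0
        rw [add_zero]
    lie_self := fun p => by
      refine Prod.ext ?_ ?_
      · show ⁅p.1, p.1⁆ + p.2 • dMap k n p.1 - p.2 • dMap k n p.1 = 0
        rw [lie_self]; abel
      · rfl
    leibniz_lie := fun p q r => by
      refine Prod.ext ?_ ?_
      · exact extL_leibniz_aux k n p.1 q.1 r.1 p.2 q.2 r.2
      · show (0 : k) = 0 + 0
        rw [add_zero] }

instance : LieAlgebra k (ExtL k n) :=
  { lie_smul := fun t p q => by
      refine Prod.ext ?_ ?_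
      · show ⁅p.1, t • q.1⁆ + p.2 • dMap k n (t • q.1) - (t * q.2) • dMap k n p.1 =
          t • (⁅p.1, q.1⁆ + p.2 • dMap k n q.1 - q.2 • dMap k n p.1)
        rw [LieAlgebra.lie_smul, LinearMap.map_smul, smul_sub, smul_add, smul_smul, smul_smul,
          smul_smul, mul_comm p.2 t]
      · show (0 : k) = t * 0
        rw [mul_zero] }

/-- The canonical embedding of `L` into `ExtL`. -/
def ExtL.inc : FreeLieAlgebra k (Fin n) →ₗ⁅k⁆ ExtL k n where
  toFun y := ((y, 0) : ExtL k n)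
  map_add' a b := by
    refine Prod.ext ?_ ?_
    · rfl
    · show (0 : k) = 0 + 0
      rw [add_zero]
  map_smul' t a := by
    refine Prod.ext ?_ ?_
    · rfl
    · show (0 : k) = t * 0
      rw [mul_zero]
  map_lie' {a b} := by
    refine Prod.ext ?_ ?_
    · show ⁅a, b⁆ = ⁅a, b⁆ + (0 : k) • dMap k n b - (0 : k) • dMap k n a
      rw [zero_smul, zero_smul, add_zero, sub_zero]
    · rfl

end FreeLieBracketAux

/-- Adjoining the relation `⁅u, v⁆ = x₀` (i.e. quotienting the free Lie algebra `L'` on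
`u, v, x₀, …, x_{n-1}` by the Lie ideal generated by `⁅u, v⁆ - x₀`) creates no new relations
among the generators `x₀, …, x_{n-1}`: the canonical Lie algebra map from the free Lie
algebra `L` on `x₀, …, x_{n-1}` is injective. -/
theorem free_lie_bracket_generator_injective
    (k : Type) [Field k] [CharZero k] (n : ℕ) (hn : 1 ≤ n) :
    let u : FreeLieAlgebra k (Fin 2 ⊕ Fin n) := FreeLieAlgebra.of k (Sum.inl 0)
    let v : FreeLieAlgebra k (Fin 2 ⊕ Fin n) := FreeLieAlgebra.of k (Sum.inl 1)
    let x0 : FreeLieAlgebra k (Fin 2 ⊕ Fin n) := FreeLieAlgebra.of k (Sum.inr ⟨0, hn⟩)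
    let I : LieIdeal k (FreeLieAlgebra k (Fin 2 ⊕ Fin n)) :=
      LieSubmodule.lieSpan k (FreeLieAlgebra k (Fin 2 ⊕ Fin n)) {⁅u, v⁆ - x0}
    Function.Injective
      ⇑((FreeLieAlgebra.lift k fun i : Fin n =>
          (LieSubmodule.Quotient.mk (N := I) (FreeLieAlgebra.of k (Sum.inr i)) :
            FreeLieAlgebra k (Fin 2 ⊕ Fin n) ⧸ I)) :
        FreeLieAlgebra k (Fin n) →ₗ⁅k⁆ FreeLieAlgebra k (Fin 2 ⊕ Fin n) ⧸ I) := by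
  intro u v x0 I
  set F : FreeLieAlgebra k (Fin n) →ₗ⁅k⁆ FreeLieAlgebra k (Fin 2 ⊕ Fin n) :=
    FreeLieAlgebra.lift k fun i => FreeLieAlgebra.of k (Sum.inr i) with hF
  set π : FreeLieAlgebra k (Fin 2 ⊕ Fin n) →ₗ⁅k⁆ FreeLieAlgebra k (Fin 2 ⊕ Fin n) ⧸ I :=
    { I.toSubmodule.mkQ with map_lie' := fun {_ _} => rfl } with hπ
  set G : FreeLieAlgebra k (Fin 2 ⊕ Fin n) →ₗ⁅k⁆ ExtL k n :=
    FreeLieAlgebra.lift k (Sum.elim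
      (fun j : Fin 2 => if j = 0 then (((0 : FreeLieAlgebra k (Fin n)), (1 : k)) : ExtL k n)
        else ((FreeLieAlgebra.of k (⟨0, hn⟩ : Fin n), (0 : k)) : ExtL k n))
      (fun i => ((FreeLieAlgebra.of k i, (0 : k)) : ExtL k n))) with hG
  have hf : (FreeLieAlgebra.lift k fun i : Fin n =>
      (LieSubmodule.Quotient.mk (N := I) (FreeLieAlgebra.of k (Sum.inr i)) :
        FreeLieAlgebra k (Fin 2 ⊕ Fin n) ⧸ I)) = π.comp F := by
    ext i
    simp only [FreeLieAlgebra.lift_of_apply, LieHom.comp_apply, hF, hπ]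
    rfl
  have hGu : G u = (((0 : FreeLieAlgebra k (Fin n)), (1 : k)) : ExtL k n) := by
    show G (FreeLieAlgebra.of k (Sum.inl 0)) = _
    rw [hG, FreeLieAlgebra.lift_of_apply]
    rfl
  have hGv : G v = ((FreeLieAlgebra.of k (⟨0, hn⟩ : Fin n), (0 : k)) : ExtL k n) := by
    show G (FreeLieAlgebra.of k (Sum.inl 1)) = _
    rw [hG, FreeLieAlgebra.lift_of_apply]
    rfl
  have hGx : G x0 = ((FreeLieAlgebra.of k (⟨0, hn⟩ : Fin n), (0 : k)) : ExtL k n) := by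
    show G (FreeLieAlgebra.of k (Sum.inr ⟨0, hn⟩)) = _
    rw [hG, FreeLieAlgebra.lift_of_apply]
    rfl
  have hGrel : G (⁅u, v⁆ - x0) = 0 := by
    rw [map_sub, LieHom.map_lie, hGu, hGv, hGx]; refine sub_eq_zero.mpr ?_
    refine Prod.ext ?_ ?_
    · show ⁅(0 : FreeLieAlgebra k (Fin n)), FreeLieAlgebra.of k (⟨0, hn⟩ : Fin n)⁆ +
        (1 : k) • dMap k n (FreeLieAlgebra.of k (⟨0, hn⟩ : Fin n)) -
        (0 : k) • dMap k n 0 = FreeLieAlgebra.of k (⟨0, hn⟩ : Fin n)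
      rw [zero_lie, one_smul, zero_smul, sub_zero, zero_add, dMap_of]
      simp
    · rfl
  have hIker : I ≤ G.ker := by
    rw [LieSubmodule.lieSpan_le]
    intro z hz
    rw [Set.mem_singleton_iff] at hz
    subst hz
    exact LieHom.mem_ker.mpr hGrel
  have hGF : G.comp F = ExtL.inc k n := by
    ext i
    simp only [LieHom.comp_apply, hF, hG, FreeLieAlgebra.lift_of_apply]
    rfl
  intro a b hab
  have h0 : (FreeLieAlgebra.lift k fun i : Fin n =>
      (LieSubmodule.Quotient.mk (N := I) (FreeLieAlgebra.of k (Sum.inr i)) :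
        FreeLieAlgebra k (Fin 2 ⊕ Fin n) ⧸ I)) (a - b) = 0 := by
    rw [map_sub, hab, sub_self]
  rw [hf] at h0
  have hmem : F (a - b) ∈ I := by
    have h1 : LieSubmodule.Quotient.mk (N := I) (F (a - b)) = 0 := h0
    exact (LieSubmodule.Quotient.mk_eq_zero').mp h1
  have hz : G (F (a - b)) = 0 := LieHom.mem_ker.mp (hIker hmem)
  have he : ExtL.inc k n (a - b) = 0 := by
    rw [← hGF]; exact hz
  have h1 : a - b = 0 := congrArg Prod.fst he
  exact sub_eq_zero.mp h1
end

section
/- Let C be a category, let M be a monad on C with unit η and multiplication μ, and let T be a comonad on C with counit ε and comultiplication δ. Define G on the Eilenberg–Moore category C^M of M-algebras as follows: on objects, G(A, a) is the free M-algebra (M(T(A)), μ_{T(A)}) on T(A); on morphisms f : (A, a) → (B, b), G(f) := M(T(f)). For each M-algebra (A, a), set ε'_{(A,a)} := a ∘ M(ε_A) : M(T(A)) → A and δ'_{(A,a)} := M(T(η_{T(A)})) ∘ M(δ_A) : M(T(A)) → M(T(M(T(A)))). Then: (i) G is a well-defined endofunctor of C^M, and ε'_{(A,a)} and δ'_{(A,a)}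 are morphisms of M-algebras; (ii) ε' : G ⇒ Id and δ' : G ⇒ G ∘ G are natural transformations; (iii) the comonad axioms hold, namely G(ε'_{(A,a)}) ∘ δ'_{(A,a)} = id, ε'_{G(A,a)} ∘ δ'_{(A,a)} = id, and δ'_{G(A,a)} ∘ δ'_{(A,a)} = G(δ'_{(A,a)}) ∘ δ'_{(A,a)} for every M-algebra (A, a). Hence (G, ε', δ') is a comonad on C^M. -/
open CategoryTheory

/-- Given a monad `M` and a comonad `T` on a category `C`, the endofunctor
`G := M.forget ⋙ T ⋙ M.free` of the Eilenberg–Moore category of `M`-algebras — i.e.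
`G(A, a) = (M(T(A)), μ_{T(A)})` on objects and `G(f) = M(T(f))` on morphisms — carries the
structure of a comonad: there are natural transformations `ε' : G ⟶ Id` and `δ' : G ⟶ G ∘ G`
(whose components are morphisms of `M`-algebras) with components
`ε'_{(A,a)} = a ∘ M(ε_A)` and `δ'_{(A,a)} = M(T(η_{T(A)})) ∘ M(δ_A)`, satisfying the comonad
axioms `G(ε') ∘ δ' = id`, `ε'_{G(-)} ∘ δ' = id` and `δ'_{G(-)} ∘ δ' = G(δ') ∘ δ'`. -/
theorem monad_comonad_composite_comonad
    {C : Type*} [Category C] (M : Monad C) (T : Comonad C) :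
    ∃ (ε' : (M.forget ⋙ T.toFunctor ⋙ M.free) ⟶ 𝟭 (Monad.Algebra M))
      (δ' : (M.forget ⋙ T.toFunctor ⋙ M.free) ⟶
        (M.forget ⋙ T.toFunctor ⋙ M.free) ⋙ (M.forget ⋙ T.toFunctor ⋙ M.free)),
      -- the component of `ε'` at `(A, a)` is `a ∘ M(ε_A)`
      (∀ A : Monad.Algebra M,
        (ε'.app A).f = M.toFunctor.map (T.ε.app A.A) ≫ A.a) ∧
      -- the component of `δ'` at `(A, a)` is `M(T(η_{T(A)})) ∘ M(δ_A)`
      (∀ A : Monad.Algebra M,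
        (δ'.app A).f =
          M.toFunctor.map (T.δ.app A.A) ≫
            M.toFunctor.map (T.toFunctor.map (M.η.app (T.toFunctor.obj A.A)))) ∧
      -- left counit axiom: `G(ε'_{(A,a)}) ∘ δ'_{(A,a)} = id`
      (∀ A : Monad.Algebra M,
        δ'.app A ≫ (M.forget ⋙ T.toFunctor ⋙ M.free).map (ε'.app A) = 𝟙 _) ∧
      -- right counit axiom: `ε'_{G(A,a)} ∘ δ'_{(A,a)} = id`
      (∀ A : Monad.Algebra M,
        δ'.app A ≫ ε'.app ((M.forget ⋙ T.toFunctor ⋙ M.free).obj A) = 𝟙 _) ∧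
      -- coassociativity: `δ'_{G(A,a)} ∘ δ'_{(A,a)} = G(δ'_{(A,a)}) ∘ δ'_{(A,a)}`
      (∀ A : Monad.Algebra M,
        δ'.app A ≫ δ'.app ((M.forget ⋙ T.toFunctor ⋙ M.free).obj A) =
          δ'.app A ≫ (M.forget ⋙ T.toFunctor ⋙ M.free).map (δ'.app A)) := by
  refine ⟨
    { app := fun A =>
        { f := M.toFunctor.map (T.ε.app A.A) ≫ A.a
          h := ?_ }
      naturality := ?_ },
    { app := fun A =>
        { f := M.toFunctor.map (T.δ.app A.A) ≫
            M.toFunctor.map (T.toFunctor.map (M.η.app (T.toFunctor.obj A.A)))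
          h := ?_ }
      naturality := ?_ },
    fun A => rfl, fun A => rfl, ?_, ?_, ?_⟩
  · -- ε' is an algebra hom
    dsimp
    show M.map (M.map (T.ε.app A.A) ≫ A.a) ≫ A.a = M.μ.app (T.obj A.A) ≫ M.map (T.ε.app A.A) ≫ A.a
    rw [Functor.map_comp, Category.assoc, ← Monad.Algebra.assoc]
    have h := M.μ.naturality (T.ε.app A.A)
    simp only [Functor.comp_map, Functor.id_obj] at h
    rw [← Category.assoc, h, Category.assoc]
  · -- naturality of ε'
    intro A B f
    ext
    dsimp
    show M.map (T.map f.f) ≫ M.map (T.ε.app B.A) ≫ B.a = (M.map (T.ε.app A.A) ≫ A.a) ≫ f.f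
    rw [← Functor.map_comp_assoc, T.ε.naturality]
    simp [f.h]
  · -- δ' is an algebra hom
    dsimp
    show M.map (M.map (T.δ.app A.A) ≫ M.map (T.map (M.η.app (T.obj A.A)))) ≫ M.μ.app (T.obj (M.obj (T.obj A.A))) = M.μ.app (T.obj A.A) ≫ M.map (T.δ.app A.A) ≫ M.map (T.map (M.η.app (T.obj A.A)))
    rw [Functor.map_comp, Category.assoc]
    have h1 := M.μ.naturality (T.δ.app A.A)
    have h2 := M.μ.naturality (T.map (M.η.app (T.obj A.A)))
    simp only [Functor.comp_map, Functor.comp_obj, Functor.id_obj] at h1 h2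
    rw [h2, ← Category.assoc, ← Category.assoc, h1]
  · -- naturality of δ'
    intro A B f
    ext
    dsimp
    show M.map (T.map f.f) ≫ M.map (T.δ.app B.A) ≫ M.map (T.map (M.η.app (T.obj B.A))) = (M.map (T.δ.app A.A) ≫ M.map (T.map (M.η.app (T.obj A.A)))) ≫ M.map (T.map (M.map (T.map f.f)))
    rw [← Functor.map_comp, ← Functor.map_comp, ← Functor.map_comp, ← Functor.map_comp]
    congr 1
    have h1 := T.δ.naturality f.f
    simp only [Functor.comp_map] at h1
    rw [← Category.assoc, h1, Category.assoc, Category.assoc]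
    congr 1
    rw [← CategoryTheory.Functor.map_comp, ← CategoryTheory.Functor.map_comp]
    exact congrArg T.toFunctor.map (by simpa using M.η.naturality (T.map f.f))
  · -- left counit
    intro A
    ext
    dsimp
    show (M.map (T.δ.app A.A) ≫ M.map (T.map (M.η.app (T.obj A.A)))) ≫ M.map (T.map (M.map (T.ε.app A.A) ≫ A.a)) = 𝟙 (M.obj (T.obj A.A))
    have key : (T.δ.app A.A ≫ T.map (M.η.app (T.obj A.A))) ≫
        T.map (M.map (T.ε.app A.A) ≫ A.a) = 𝟙 _ := by
      rw [Category.assoc, ← Functor.map_comp]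
      have h : M.η.app (T.obj A.A) ≫ M.map (T.ε.app A.A) ≫ A.a = T.ε.app A.A := by
        rw [← M.η.naturality_assoc]
        simp [Monad.Algebra.unit]
      rw [← Category.assoc (M.η.app (T.obj A.A)), Category.assoc] at h
      rw [h, T.right_counit]
    have hk := congrArg M.toFunctor.map key
    rw [CategoryTheory.Functor.map_id] at hk
    simpa only [CategoryTheory.Functor.map_comp, Category.assoc] using hk
  · -- right counit
    intro A
    ext
    dsimp
    show (M.map (T.δ.app A.A) ≫ M.map (T.map (M.η.app (T.obj A.A)))) ≫ M.map (T.ε.app (M.obj (T.obj A.A))) ≫ M.μ.app (T.obj A.A) = 𝟙 (M.obj (T.obj A.A))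
    have h := T.ε.naturality (M.η.app (T.obj A.A))
    simp only [Functor.id_map, Functor.id_obj] at h
    have key : (T.δ.app A.A ≫ T.map (M.η.app (T.obj A.A))) ≫
        T.ε.app (M.obj (T.obj A.A)) = M.η.app (T.obj A.A) := by
      rw [Category.assoc, h, ← Category.assoc, T.left_counit, Category.id_comp]
    have hk := congrArg M.toFunctor.map key
    simp only [Functor.map_comp, Category.assoc] at hk
    simp only [← Category.assoc] at hk ⊢
    rw [hk, M.right_unit]
    rfl
  · -- coassoc
    intro A
    ext
    dsimp
    show (M.map (T.δ.app A.A) ≫ M.map (T.map (M.η.app (T.obj A.A)))) ≫ M.map (T.δ.app (M.obj (T.obj A.A))) ≫ M.map (T.map (M.η.app (T.obj (M.obj (T.obj A.A))))) = (M.map (T.δ.app A.A) ≫ M.map (T.map (M.η.app (T.obj A.A)))) ≫ M.map (T.map (M.map (T.δ.app A.A) ≫ M.map (T.map (M.η.app (T.obj A.A)))))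
    have hδ := T.δ.naturality (M.η.app (T.obj A.A))
    simp only [Functor.comp_map, Functor.id_obj] at hδ
    have key : (T.δ.app A.A ≫ T.map (M.η.app (T.obj A.A))) ≫
        T.δ.app (M.obj (T.obj A.A)) ≫ T.map (M.η.app (T.obj (M.obj (T.obj A.A)))) =
        (T.δ.app A.A ≫ T.map (M.η.app (T.obj A.A))) ≫
          T.map (M.map (T.δ.app A.A) ≫ M.map (T.map (M.η.app (T.obj A.A)))) := by
      have h1 := M.η.naturality (T.δ.app A.A)
      have h2 := M.η.naturality (T.map (M.η.app (T.obj A.A)))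
      simp only [Functor.id_map, Functor.id_obj, Functor.comp_obj] at h1 h2
      calc (T.δ.app A.A ≫ T.map (M.η.app (T.obj A.A))) ≫
            T.δ.app (M.obj (T.obj A.A)) ≫ T.map (M.η.app (T.obj (M.obj (T.obj A.A))))
          = T.δ.app A.A ≫ (T.map (M.η.app (T.obj A.A)) ≫ T.δ.app (M.obj (T.obj A.A))) ≫
              T.map (M.η.app (T.obj (M.obj (T.obj A.A)))) := by simp
        _ = T.δ.app A.A ≫ (T.δ.app (T.obj A.A) ≫ T.map (T.map (M.η.app (T.obj A.A)))) ≫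
              T.map (M.η.app (T.obj (M.obj (T.obj A.A)))) := by rw [hδ]
        _ = (T.δ.app A.A ≫ T.δ.app (T.obj A.A)) ≫
              T.map (T.map (M.η.app (T.obj A.A)) ≫ M.η.app (T.obj (M.obj (T.obj A.A)))) := by
              simp
        _ = (T.δ.app A.A ≫ T.map (T.δ.app A.A)) ≫
              T.map (T.map (M.η.app (T.obj A.A)) ≫ M.η.app (T.obj (M.obj (T.obj A.A)))) := by
              rw [T.coassoc]
        _ = T.δ.app A.A ≫ T.map (T.δ.app A.A ≫ T.map (M.η.app (T.obj A.A)) ≫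
              M.η.app (T.obj (M.obj (T.obj A.A)))) := by simp
        _ = T.δ.app A.A ≫ T.map (T.δ.app A.A ≫ M.η.app (T.obj (T.obj A.A)) ≫
              M.map (T.map (M.η.app (T.obj A.A)))) := by rw [h2]
        _ = T.δ.app A.A ≫ T.map ((M.η.app (T.obj A.A) ≫ M.map (T.δ.app A.A)) ≫
              M.map (T.map (M.η.app (T.obj A.A)))) := by rw [← h1]; simp
        _ = _ := by simp
    have := congrArg M.toFunctor.map key
    simpa only [Functor.map_comp, Category.assoc] using this
end

section
/- Let k be a field of characteristic 0, let X be a type, let L := FreeLieAlgebra k X be the free Lie algebra over k on X, and let I be a Lie ideal of L with quotient map π : L → L ⧸ I. Let U(π) : UniversalEnvelopingAlgebra k L → UniversalEnvelopingAlgebra k (L ⧸ I) be the k-algebra homomorphism induced by π (i.e., the unique algebra map satisfying U(π) ∘ ι_L = ι_{L⧸I} ∘ π). Then U(π) is surjective, and its kernel is the two-sided ideal of UniversalEnvelopingAlgebra k L generated by the image ι_L(I) of I under the canonical map ι_L : L → UniversalEnvelopingAlgebra k L. -/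
set_option maxHeartbeats 1000000
set_option synthInstance.maxHeartbeats 400000

attribute [local instance] LieRing.ofAssociativeRing

open UniversalEnvelopingAlgebra

variable {k : Type} [Field k] {L : Type} [LieRing L] [LieAlgebra k L]

/-- Lift of a Lie algebra morphism vanishing on an ideal to the quotient. -/
def LieIdeal.quotLift {L' : Type} [LieRing L'] [LieAlgebra k L']
    (I : LieIdeal k L) (f : L →ₗ⁅k⁆ L') (h : ∀ x ∈ I, f x = 0) :
    (L ⧸ I) →ₗ⁅k⁆ L' :=
  { toLinearMap := Submodule.liftQ (LieSubmodule.toSubmodule I) f.toLinearMap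
      (fun x hx => h x hx)
    map_lie' := by
      rintro ⟨x⟩ ⟨y⟩
      exact f.map_lie x y }

@[simp] lemma LieIdeal.quotLift_mk {L' : Type} [LieRing L'] [LieAlgebra k L']
    (I : LieIdeal k L) (f : L →ₗ⁅k⁆ L') (h : ∀ x ∈ I, f x = 0) (x : L) :
    I.quotLift f h (LieSubmodule.Quotient.mk (N := I) x) = f x := rfl

/-- (Consequence of Poincaré–Birkhoff–Witt.) For a Lie ideal `I` of a free Lie algebra `L`,
the algebra homomorphism between universal enveloping algebras induced by the quotient map
`π : L → L ⧸ I` (characterized by `U(π) ∘ ι_L = ι_{L⧸I} ∘ π`) is surjective, and its kernel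
is the two-sided ideal generated by the image of `I` under `ι_L`. -/
theorem universalEnveloping_quotient_of_freeLie
    (k : Type) [Field k] [CharZero k] (X : Type)
    (I : LieIdeal k (FreeLieAlgebra k X))
    (F : UniversalEnvelopingAlgebra k (FreeLieAlgebra k X) →ₐ[k]
      UniversalEnvelopingAlgebra k (FreeLieAlgebra k X ⧸ I))
    (hF : ∀ y : FreeLieAlgebra k X,
      F (UniversalEnvelopingAlgebra.ι k y) =
        UniversalEnvelopingAlgebra.ι k
          (LieSubmodule.Quotient.mk (N := I) y : FreeLieAlgebra k X ⧸ I)) :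
    Function.Surjective F ∧
      TwoSidedIdeal.ker F =
        TwoSidedIdeal.span
          (⇑(UniversalEnvelopingAlgebra.ι k :
              FreeLieAlgebra k X →ₗ⁅k⁆ UniversalEnvelopingAlgebra k (FreeLieAlgebra k X)) ''
            (I : Set (FreeLieAlgebra k X))) := by
  set L := FreeLieAlgebra k X
  set U := UniversalEnvelopingAlgebra k L
  set U' := UniversalEnvelopingAlgebra k (L ⧸ I)
  set S : Set U := (⇑(ι k : L →ₗ⁅k⁆ U) '' (I : Set L)) with hS
  set J : TwoSidedIdeal U := TwoSidedIdeal.span S with hJ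
  -- Surjectivity
  have hsurj : Function.Surjective F := by
    have hmem : ∀ z : L ⧸ I, (ι k z : U') ∈ F.range := by
      intro z
      obtain ⟨y, rfl⟩ := LieSubmodule.Quotient.surjective_mk' I z
      exact ⟨ι k y, hF y⟩
    let h : (L ⧸ I) →ₗ⁅k⁆ F.range :=
      { toFun := fun z => ⟨ι k z, hmem z⟩
        map_add' := fun a b => by ext; simp
        map_smul' := fun c a => by ext; simp
        map_lie' := fun {a b} => by
          ext
          simp [Ring.lie_def, MulMemClass.coe_mul] }
    let G' : U' →ₐ[k] F.range := lift k h
    have key : (F.range.val.comp G') = AlgHom.id k U' := by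
      apply UniversalEnvelopingAlgebra.hom_ext
      refine LieHom.ext fun z => ?_
      simp [G', h, lift_ι_apply]
      rfl
    intro u
    have : F.range.val (G' u) = u := congrArg (fun f => f u) (congrArg DFunLike.coe key)
    obtain ⟨v, hv⟩ := (G' u).2
    exact ⟨v, by rw [← this]; exact hv⟩
  refine ⟨hsurj, le_antisymm ?_ ?_⟩
  · -- ker F ≤ J
    -- build the quotient ring U / J and the map G : U' → U/J
    letI Q := J.ringCon.Quotient
    letI : Algebra k Q :=
      RingHom.toAlgebra' (J.ringCon.mk'.comp (algebraMap k U)) (by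
        intro c x
        induction x using Quotient.ind with
        | _ y =>
          show J.ringCon.mk' _ * J.ringCon.mk' y = J.ringCon.mk' y * J.ringCon.mk' _
          rw [← map_mul, ← map_mul, Algebra.commutes])
    let p : U →ₐ[k] Q :=
      { toRingHom := J.ringCon.mk'
        commutes' := fun c => rfl }
    have hpJ : ∀ x ∈ I, p (ι k x) = 0 := by
      intro x hx
      have : (ι k x : U) ∈ J := TwoSidedIdeal.subset_span ⟨x, hx, rfl⟩
      show J.ringCon.mk' (ι k x) = 0
      have h0 : (0 : Q) = J.ringCon.mk' 0 := rfl
      rw [h0]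
      exact (RingCon.eq _).mpr (by simpa [TwoSidedIdeal.rel_iff] using this)
    let g : L →ₗ⁅k⁆ Q := p.toLieHom.comp (ι k)
    let gbar : (L ⧸ I) →ₗ⁅k⁆ Q := I.quotLift g hpJ
    let G : U' →ₐ[k] Q := lift k gbar
    have key : G.comp F = p := by
      apply UniversalEnvelopingAlgebra.hom_ext
      refine LieHom.ext fun y => ?_
      show G (F (ι k y)) = p (ι k y)
      rw [hF y]
      show (lift k gbar) (ι k _) = _
      rw [lift_ι_apply]
      rfl
    intro x hx
    have hx0 : F x = 0 := (TwoSidedIdeal.mem_ker F).mp hx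
    have : p x = 0 := by
      rw [← key]
      simp [AlgHom.comp_apply, hx0]
    have h0 : J.ringCon.mk' x = J.ringCon.mk' 0 := this
    have := (RingCon.eq _).mp h0
    rw [TwoSidedIdeal.rel_iff] at this
    simpa using this
  · -- J ≤ ker F
    intro x hx
    refine TwoSidedIdeal.mem_span_iff.mp hx (TwoSidedIdeal.ker F) ?_
    rintro _ ⟨y, hy, rfl⟩
    rw [SetLike.mem_coe, TwoSidedIdeal.mem_ker F]
    rw [hF y]
    have : (LieSubmodule.Quotient.mk (N := I) y : L ⧸ I) = 0 :=
      (LieSubmodule.Quotient.mk_eq_zero I).mpr hy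
    rw [this, map_zero]
end

section
/- Let k be a field of characteristic 0 and let X be a type. Then the Lie algebra homomorphism FreeLieAlgebra k X → FreeAlgebra k X determined (via the universal property of the free Lie algebra) by sending each generator of(x) to ι(x), where the free associative algebra FreeAlgebra k X is regarded as a Lie algebra via the commutator bracket ⁅a, b⁆ := a*b − b*a, is injective. -/
attribute [local instance 100] LieRing.ofAssociativeRing

namespace FLAInj
open FreeLieAlgebra
noncomputable section
set_option linter.unusedSectionVars false
variable (k : Type) [Field k] [CharZero k] (X : Type)

def sig : FreeLieAlgebra k X →ₗ⁅k⁆ FreeAlgebra k X :=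
  FreeLieAlgebra.lift k fun x : X => FreeAlgebra.ι k x

def Phi : FreeAlgebra k X →ₐ[k] Module.End k (FreeLieAlgebra k X) :=
  FreeAlgebra.lift k fun x => LieAlgebra.ad k _ (of k x)

lemma Phi_sig (l : FreeLieAlgebra k X) : Phi k X (sig k X l) = LieAlgebra.ad k _ l := by
  have h : ((Phi k X : FreeAlgebra k X →ₗ⁅k⁆ Module.End k (FreeLieAlgebra k X)).comp (sig k X))
      = LieAlgebra.ad k (FreeLieAlgebra k X) := by
    ext x
    simp [sig, Phi]
  exact LieHom.congr_fun h l

def eps : FreeAlgebra k X →ₐ[k] k := FreeAlgebra.lift k 0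

lemma eps_sig (l : FreeLieAlgebra k X) : eps k X (sig k X l) = 0 := by
  have h : ((eps k X : FreeAlgebra k X →ₗ⁅k⁆ k).comp (sig k X)) = 0 := by
    ext x
    simp [sig, eps]
  exact LieHom.congr_fun h l

def brkt : List X → FreeLieAlgebra k X
  | [] => 0
  | [x] => of k x
  | x :: y :: t => ⁅of k x, brkt (y :: t)⁆

lemma brkt_cons (x : X) (l : List X) (hl : l ≠ []) :
    brkt k X (x :: l) = ⁅of k x, brkt k X l⁆ := by
  cases l with
  | nil => exact absurd rfl hl
  | cons y t => rfl

abbrev e : FreeAlgebra k X ≃ₐ[k] MonoidAlgebra k (FreeMonoid X) :=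
  FreeAlgebra.equivMonoidAlgebraFreeMonoid (R := k) (X := X)

def emb : FreeMonoid X →* FreeAlgebra k X :=
  ((e k X).symm.toAlgHom.toMonoidHom).comp (MonoidAlgebra.of k (FreeMonoid X))

lemma e_emb (w : FreeMonoid X) : e k X (emb k X w) = MonoidAlgebra.single w 1 := by
  simp [emb, MonoidAlgebra.of_apply]

lemma emb_of (x : X) : emb k X (FreeMonoid.of x) = FreeAlgebra.ι k x := by
  apply (e k X).injective
  rw [e_emb]
  simp [FreeAlgebra.equivMonoidAlgebraFreeMonoid, MonoidAlgebra.of_apply]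

def j : FreeAlgebra k X →ₗ[k] FreeLieAlgebra k X :=
  (Finsupp.linearCombination k (fun w : FreeMonoid X => brkt k X w.toList)) ∘ₗ
    (MonoidAlgebra.coeffLinearEquiv k).toLinearMap ∘ₗ (e k X).toLinearMap

lemma j_apply (a : FreeAlgebra k X) :
    j k X a = Finsupp.linearCombination k (fun w : FreeMonoid X => brkt k X w.toList)
      (e k X a).coeff := rfl

lemma j_emb (w : FreeMonoid X) : j k X (emb k X w) = brkt k X w.toList := by
  rw [j_apply, e_emb, MonoidAlgebra.coeff_single, Finsupp.linearCombination_single, one_smul]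

lemma emb_ofList_cons (x : X) (t : List X) :
    emb k X (FreeMonoid.ofList (x :: t)) =
      FreeAlgebra.ι k x * emb k X (FreeMonoid.ofList t) := by
  have : FreeMonoid.ofList (x :: t) = FreeMonoid.of x * FreeMonoid.ofList t := rfl
  rw [this, map_mul, emb_of]

lemma Phi_emb_brkt (u v : List X) (hv : v ≠ []) :
    Phi k X (emb k X (FreeMonoid.ofList u)) (brkt k X v) = brkt k X (u ++ v) := by
  induction u with
  | nil =>
      have h1 : FreeMonoid.ofList ([] : List X) = 1 := rfl
      rw [h1, map_one]
      simp
  | cons x t ih =>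
      rw [emb_ofList_cons, map_mul, Module.End.mul_apply, ih,
        Phi, FreeAlgebra.lift_ι_apply, List.cons_append,
        brkt_cons k X x (t ++ v) (by simp [hv])]
      rfl

lemma Phi_emb_brkt' (w v : FreeMonoid X) (hv : v.toList ≠ []) :
    Phi k X (emb k X w) (brkt k X v.toList) = brkt k X (w * v).toList := by
  conv_lhs => rw [← FreeMonoid.ofList_toList w]
  rw [Phi_emb_brkt k X _ _ hv]
  rfl

lemma eps_emb (v : List X) (hv : v ≠ []) :
    eps k X (emb k X (FreeMonoid.ofList v)) = 0 := by
  cases v with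
  | nil => exact absurd rfl hv
  | cons x t =>
      rw [emb_ofList_cons, map_mul, eps, FreeAlgebra.lift_ι_apply, Pi.zero_apply, zero_mul]

lemma eps_emb' (v : FreeMonoid X) (hv : v.toList ≠ []) : eps k X (emb k X v) = 0 := by
  rw [← FreeMonoid.ofList_toList v]
  exact eps_emb k X v.toList hv

lemma j_one : j k X (1 : FreeAlgebra k X) = 0 := by
  have h1 : (1 : FreeAlgebra k X) = emb k X 1 := (map_one _).symm
  rw [h1, j_emb]
  rfl

lemma key (a b : FreeAlgebra k X) :
    j k X (a * b) = Phi k X a (j k X b) + eps k X b • j k X a := by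
  have ha : a = (e k X).symm (e k X a) := ((e k X).symm_apply_apply a).symm
  have hb : b = (e k X).symm (e k X b) := ((e k X).symm_apply_apply b).symm
  rw [ha, hb]
  generalize (e k X a) = f
  generalize (e k X b) = g
  induction f using MonoidAlgebra.induction_linear with
  | zero => simp
  | add p q hp hq =>
      rw [map_add, add_mul, map_add, map_add, map_add, hp, hq]
      simp only [LinearMap.add_apply, smul_add]
      abel
  | single w c =>
    induction g using MonoidAlgebra.induction_linear with
    | zero => simp
    | add p q hp hq =>
        rw [map_add, mul_add, map_add, map_add, map_add, map_add, hp, hq]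
        simp only [smul_add, add_smul]
        abel
    | single v d =>
        have hw : (e k X).symm (MonoidAlgebra.single w c) = c • emb k X w := by
          rw [show (MonoidAlgebra.single w c : MonoidAlgebra k (FreeMonoid X))
              = c • MonoidAlgebra.single w 1 from by
            rw [MonoidAlgebra.smul_single, smul_eq_mul, mul_one], map_smul]
          rfl
        have hv : (e k X).symm (MonoidAlgebra.single v d) = d • emb k X v := by
          rw [show (MonoidAlgebra.single v d : MonoidAlgebra k (FreeMonoid X))
              = d • MonoidAlgebra.single v 1 from by
            rw [MonoidAlgebra.smul_single, smul_eq_mul, mul_one], map_smul]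
          rfl
        rw [hw, hv]
        simp only [smul_mul_smul_comm, map_smul, LinearMap.smul_apply, smul_eq_mul]
        rw [← map_mul (emb k X)]
        rcases eq_or_ne v.toList [] with h | h
        · have hv1 : v = 1 := FreeMonoid.toList.injective h
          subst hv1
          rw [mul_one, map_one, j_one, map_one]
          simp only [smul_zero, map_zero]
          rw [zero_add]
          module
        · rw [j_emb, j_emb, j_emb, ← Phi_emb_brkt' k X w v h, eps_emb' k X v h]
          simp only [mul_zero, zero_smul, smul_zero, add_zero]
          module

inductive Homo : ℕ → FreeLieAlgebra k X → Prop
  | of (x : X) : Homo 1 (of k x)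
  | brk {m n : ℕ} {u v : FreeLieAlgebra k X} :
      Homo m u → Homo n v → Homo (m + n) ⁅u, v⁆

lemma Homo.pos {m : ℕ} {l : FreeLieAlgebra k X} (h : Homo k X m l) : 0 < m := by
  induction h with
  | of x => norm_num
  | brk hu hv ihu ihv => omega

lemma eps_sig_homo {m : ℕ} {l : FreeLieAlgebra k X} (h : Homo k X m l) :
    eps k X (sig k X l) = 0 := eps_sig k X l

lemma dsw {m : ℕ} {l : FreeLieAlgebra k X} (h : Homo k X m l) :
    j k X (sig k X l) = m • l := by
  induction h with
  | of x =>
      have h1 : sig k X (of k x) = FreeAlgebra.ι k x := by simp [sig]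
      rw [h1, ← emb_of, j_emb]
      rw [show (FreeMonoid.of x).toList = [x] from rfl]
      rw [one_smul]
      rfl
  | @brk m n u v hu hv ihu ihv =>
      have hlie : sig k X ⁅u, v⁆ = sig k X u * sig k X v - sig k X v * sig k X u := by
        rw [LieHom.map_lie]
        rfl
      rw [hlie, map_sub, key, key, eps_sig, eps_sig, zero_smul, zero_smul,
        add_zero, add_zero, ihu, ihv, Phi_sig, Phi_sig, map_nsmul, map_nsmul]
      rw [LieAlgebra.ad_apply, LieAlgebra.ad_apply, ← lie_skew v u]
      rw [smul_neg, sub_neg_eq_add, add_comm m n, add_smul]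

lemma support_sig {m : ℕ} {l : FreeLieAlgebra k X} (h : Homo k X m l) :
    ∀ w ∈ (e k X (sig k X l)).coeff.support, w.toList.length = m := by
  classical
  induction h with
  | of x =>
      intro w hw
      have h1 : sig k X (of k x) = FreeAlgebra.ι k x := by simp [sig]
      rw [h1, ← emb_of, e_emb, MonoidAlgebra.coeff_single] at hw
      have := Finsupp.support_single_subset hw
      simp only [Finset.mem_singleton] at this
      subst this
      rfl
  | @brk m n u v hu hv ihu ihv =>
      intro w hw
      have hlie : e k X (sig k X ⁅u, v⁆) =
          e k X (sig k X u) * e k X (sig k X v) - e k X (sig k X v) * e k X (sig k X u) := by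
        rw [LieHom.map_lie]
        rw [show ⁅sig k X u, sig k X v⁆ = sig k X u * sig k X v - sig k X v * sig k X u from rfl]
        rw [map_sub, map_mul, map_mul]
      rw [hlie] at hw
      have hsub := Finsupp.support_sub (show w ∈ ((e k X (sig k X u) * e k X (sig k X v)).coeff -
          (e k X (sig k X v) * e k X (sig k X u)).coeff).support from hw)
      have len : ∀ (m' n' : ℕ) (p q : FreeAlgebra k X),
          (∀ a ∈ (e k X p).coeff.support, a.toList.length = m') →
          (∀ a ∈ (e k X q).coeff.support, a.toList.length = n') →
          ∀ a ∈ (e k X p * e k X q).coeff.support, a.toList.length = m' + n' := by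
        intro m' n' p q hp hq a ha
        have := MonoidAlgebra.support_coeff_mul_subset (e k X p) (e k X q) ha
        obtain ⟨b, hb, c, hc, rfl⟩ := Finset.mem_mul.mp this
        have : (b * c).toList = b.toList ++ c.toList := rfl
        rw [this, List.length_append, hp b hb, hq c hc]
      rcases Finset.mem_union.mp hsub with h1 | h1
      · exact len m n _ _ ihu ihv w h1
      · rw [add_comm m n]
        exact len n m _ _ ihv ihu w (by simpa using h1)

def jn (n : ℕ) : FreeAlgebra k X →ₗ[k] FreeLieAlgebra k X :=
  (Finsupp.linearCombination k (fun w : FreeMonoid X =>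
    if w.toList.length = n then brkt k X w.toList else 0)) ∘ₗ (MonoidAlgebra.coeffLinearEquiv k).toLinearMap ∘ₗ
    (e k X).toLinearMap

lemma jn_apply (n : ℕ) (a : FreeAlgebra k X) :
    jn k X n a = Finsupp.linearCombination k (fun w : FreeMonoid X =>
      if w.toList.length = n then brkt k X w.toList else 0) (e k X a).coeff := rfl

lemma jn_homo {m : ℕ} {l : FreeLieAlgebra k X} (h : Homo k X m l) (n : ℕ) :
    jn k X n (sig k X l) = if n = m then j k X (sig k X l) else 0 := by
  have hsupp := support_sig k X h
  rw [jn_apply, j_apply, Finsupp.linearCombination_apply, Finsupp.linearCombination_apply,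
    Finsupp.sum, Finsupp.sum]
  rcases eq_or_ne n m with rfl | hne
  · rw [if_pos rfl]
    exact Finset.sum_congr rfl fun w hw => by rw [if_pos (hsupp w hw)]
  · rw [if_neg hne]
    exact Finset.sum_eq_zero fun w hw => by
      rw [if_neg (by rw [hsupp w hw]; exact fun hc => hne hc.symm), smul_zero]

def T (n : ℕ) : FreeLieAlgebra k X →ₗ[k] FreeLieAlgebra k X :=
  (n : k)⁻¹ • ((jn k X n) ∘ₗ (sig k X : FreeLieAlgebra k X →ₗ[k] FreeAlgebra k X))

lemma T_apply (n : ℕ) (l : FreeLieAlgebra k X) :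
    T k X n l = (n : k)⁻¹ • jn k X n (sig k X l) := rfl

lemma T_homo {m : ℕ} {l : FreeLieAlgebra k X} (h : Homo k X m l) (n : ℕ) :
    T k X n l = if n = m then l else 0 := by
  rw [T_apply, jn_homo k X h n]
  rcases eq_or_ne n m with rfl | hne
  · rw [if_pos rfl, if_pos rfl, dsw k X h]
    have hm : ((n : k)) ≠ 0 := Nat.cast_ne_zero.mpr (by have := h.pos; omega)
    rw [← Nat.cast_smul_eq_nsmul k, smul_smul, inv_mul_cancel₀ hm, one_smul]
  · rw [if_neg hne, if_neg hne, smul_zero]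

def U : Set (FreeLieAlgebra k X) := {l | ∃ m, Homo k X m l}

lemma lie_mem_span :
    ∀ a ∈ Submodule.span k (U k X), ∀ b ∈ Submodule.span k (U k X),
      ⁅a, b⁆ ∈ Submodule.span k (U k X) := by
  intro a ha
  induction ha using Submodule.span_induction with
  | mem u hu =>
      intro b hb
      induction hb using Submodule.span_induction with
      | mem v hv =>
          obtain ⟨p, hp⟩ := hu
          obtain ⟨q, hq⟩ := hv
          exact Submodule.subset_span ⟨p + q, Homo.brk hp hq⟩
      | zero => rw [lie_zero]; exact Submodule.zero_mem _
      | add x y hx hy ihx ihy => rw [lie_add]; exact Submodule.add_mem _ ihx ihy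
      | smul c x hx ihx => rw [lie_smul]; exact Submodule.smul_mem _ c ihx
  | zero => intro b hb; rw [zero_lie]; exact Submodule.zero_mem _
  | add x y hx hy ihx ihy =>
      intro b hb; rw [add_lie]; exact Submodule.add_mem _ (ihx b hb) (ihy b hb)
  | smul c x hx ihx =>
      intro b hb; rw [smul_lie]; exact Submodule.smul_mem _ c (ihx b hb)

def S : LieSubalgebra k (FreeLieAlgebra k X) :=
  { Submodule.span k (U k X) with
    lie_mem' := fun {a b} ha hb => lie_mem_span k X a ha b hb }

lemma mem_span (l : FreeLieAlgebra k X) : l ∈ Submodule.span k (U k X) := by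
  let π : FreeLieAlgebra k X →ₗ⁅k⁆ S k X :=
    FreeLieAlgebra.lift k fun x =>
      (⟨of k x, Submodule.subset_span ⟨1, Homo.of x⟩⟩ : S k X)
  have hcomp : (S k X).incl.comp π = LieHom.id := by
    ext x
    simp [π, LieSubalgebra.coe_incl]
  have h := LieHom.congr_fun hcomp l
  rw [LieHom.comp_apply, LieSubalgebra.coe_incl, LieHom.id_apply] at h
  rw [← h]
  exact (π l).2

def P : Submodule k (FreeLieAlgebra k X) where
  carrier := {l | ∃ s : Finset ℕ,
    (∀ n ∉ s, T k X n l = 0) ∧ l = ∑ n ∈ s, T k X n l}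
  zero_mem' := ⟨∅, fun n _ => by rw [map_zero], by simp⟩
  add_mem' := by
    rintro a b ⟨s, hs0, hs⟩ ⟨t, ht0, ht⟩
    refine ⟨s ∪ t, fun n hn => ?_, ?_⟩
    · rw [map_add, hs0 n (fun hc => hn (Finset.mem_union_left _ hc)),
        ht0 n (fun hc => hn (Finset.mem_union_right _ hc)), add_zero]
    · have h1 : ∑ n ∈ s ∪ t, T k X n a = ∑ n ∈ s, T k X n a :=
        (Finset.sum_subset Finset.subset_union_left
          (fun n _ hns => hs0 n hns)).symm
      have h2 : ∑ n ∈ s ∪ t, T k X n b = ∑ n ∈ t, T k X n b :=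
        (Finset.sum_subset Finset.subset_union_right
          (fun n _ hnt => ht0 n hnt)).symm
      calc a + b = ∑ n ∈ s ∪ t, T k X n a + ∑ n ∈ s ∪ t, T k X n b := by
            rw [h1, h2, ← hs, ← ht]
        _ = ∑ n ∈ s ∪ t, T k X n (a + b) := by
            rw [← Finset.sum_add_distrib]
            exact Finset.sum_congr rfl fun n _ => (map_add _ a b).symm
  smul_mem' := by
    rintro c a ⟨s, hs0, hs⟩
    refine ⟨s, fun n hn => by rw [map_smul, hs0 n hn, smul_zero], ?_⟩
    calc c • a = c • ∑ n ∈ s, T k X n a := by rw [← hs]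
      _ = ∑ n ∈ s, T k X n (c • a) := by
          rw [Finset.smul_sum]
          exact Finset.sum_congr rfl fun n _ => (map_smul _ c a).symm

lemma homo_mem_P {m : ℕ} {l : FreeLieAlgebra k X} (h : Homo k X m l) : l ∈ P k X := by
  refine ⟨{m}, fun n hn => ?_, ?_⟩
  · rw [T_homo k X h, if_neg (by simpa using hn)]
  · rw [Finset.sum_singleton, T_homo k X h, if_pos rfl]

lemma main (l : FreeLieAlgebra k X) (h0 : sig k X l = 0) : l = 0 := by
  have hP : Submodule.span k (U k X) ≤ P k X :=
    Submodule.span_le.mpr fun u hu => by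
      obtain ⟨m, hm⟩ := hu
      exact homo_mem_P k X hm
  obtain ⟨s, _, hsum⟩ := hP (mem_span k X l)
  rw [hsum]
  exact Finset.sum_eq_zero fun n _ => by rw [T_apply, h0, map_zero, smul_zero]

end


end FLAInj

/-- The canonical Lie algebra homomorphism from the free Lie algebra on `X` to the free
associative algebra on `X` (with the commutator bracket), sending each generator `of x`
to `ι x`, is injective. -/
theorem freeLieAlgebra_to_freeAlgebra_injective
    (k : Type) [Field k] [CharZero k] (X : Type) :
    Function.Injective
      ⇑((FreeLieAlgebra.lift k fun x : X => FreeAlgebra.ι k x) :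
        FreeLieAlgebra k X →ₗ⁅k⁆ FreeAlgebra k X) := by
  intro a b hab
  have hab' : FLAInj.sig k X a = FLAInj.sig k X b := hab
  have h0 : FLAInj.sig k X (a - b) = 0 := by
    have h1 : (FLAInj.sig k X).toLinearMap (a - b) = 0 := by
      rw [map_sub]
      show FLAInj.sig k X a - FLAInj.sig k X b = 0
      rw [hab', sub_self]
    exact h1
  exact sub_eq_zero.mp (FLAInj.main k X (a - b) h0)
end

section
/- Let k be a field of characteristic 0 and let n ≥ 1 be a natural number. Let L := FreeLieAlgebra k (Fin 2 ⊕ Fin n) and B := FreeAlgebra k (Fin 2 ⊕ Fin n), with generators u, v corresponding to Sum.inl 0 and Sum.inl 1 and x_i corresponding to Sum.inr i in each, and let φ : L → B be the canonical Lie algebra homomorphism sending each generator of L to the corresponding generator of B, where B carries the commutator bracket ⁅a, b⁆ := a*b − b*a. Let I be the Lie ideal of L generated by ⁅u, v⁆ − x_0, and let J be the two-sided ideal of B generated by u*v − v*u − x_0, so that φ maps I into J. Then the induced Lie algebra homomorphism L ⧸ I → B ⧸ J (where B ⧸ J carries the commutator bracket) is injective. -/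
attribute [local instance 100] LieRing.ofAssociativeRing

noncomputable section

namespace DSWAux

open FreeLieAlgebra

variable (k : Type) [Field k] (X : Type)

/-- Right-normed Dynkin bracketing of a word. -/
def d0 : List X → FreeLieAlgebra k X
  | [] => 0
  | [x] => of k x
  | x :: y :: w => ⁅of k x, d0 (y :: w)⁆

variable {X} in
lemma d0_cons (x : X) {w : List X} (h : w ≠ []) :
    d0 k X (x :: w) = ⁅of k x, d0 k X w⁆ := by
  cases w with
  | nil => exact absurd rfl h
  | cons a l => rfl

/-- The Dynkin map on the monoid algebra. -/
def D : MonoidAlgebra k (FreeMonoid X) →ₗ[k] FreeLieAlgebra k X :=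
  (Finsupp.linearCombination k fun w : FreeMonoid X => d0 k X w.toList).comp
    (MonoidAlgebra.coeffLinearEquiv k).toLinearMap

lemma D_single (w : FreeMonoid X) (c : k) :
    D k X (MonoidAlgebra.single w c) = c • d0 k X w.toList := by
  rw [D, LinearMap.comp_apply]; exact Finsupp.linearCombination_single ..

/-- Words acting on the free Lie algebra by iterated adjoint action. -/
def ads : FreeMonoid X →* Module.End k (FreeLieAlgebra k X) :=
  FreeMonoid.lift fun x => (LieAlgebra.ad k (FreeLieAlgebra k X) (of k x) : Module.End k _)

/-- The associated algebra map on the monoid algebra. -/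
def τ : MonoidAlgebra k (FreeMonoid X) →ₐ[k] Module.End k (FreeLieAlgebra k X) :=
  MonoidAlgebra.lift k _ (FreeMonoid X) (ads k X)

lemma τ_single (w : FreeMonoid X) (c : k) :
    τ k X (MonoidAlgebra.single w c) = c • ads k X w :=
  MonoidAlgebra.lift_single ..

variable {X} in
lemma d0_append (u : List X) {v : List X} (hv : v ≠ []) :
    d0 k X (u ++ v)
      = (u.map fun x => (LieAlgebra.ad k (FreeLieAlgebra k X) (of k x) :
          Module.End k (FreeLieAlgebra k X))).prod (d0 k X v) := by
  induction u with
  | nil => simp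
  | cons x u ih =>
    have h : u ++ v ≠ [] := by
      intro hc
      exact hv (List.append_eq_nil_iff.mp hc).2
    rw [List.cons_append, d0_cons k x h, ih, List.map_cons, List.prod_cons,
      Module.End.mul_apply, LieAlgebra.ad_apply]

lemma D_single_mul_single (u v : FreeMonoid X) (c d : k) (hv : v.toList ≠ []) :
    D k X (MonoidAlgebra.single u c * MonoidAlgebra.single v d)
      = τ k X (MonoidAlgebra.single u c) (D k X (MonoidAlgebra.single v d)) := by
  rw [MonoidAlgebra.single_mul_single, D_single, D_single, τ_single]
  rw [FreeMonoid.toList_mul, d0_append k _ hv]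
  rw [LinearMap.smul_apply, LinearMap.map_smul]
  rw [mul_smul]
  have hads : (List.map (fun x => (LieAlgebra.ad k (FreeLieAlgebra k X)) (of k x))
      (FreeMonoid.toList u)).prod = ads k X u := (FreeMonoid.lift_apply _ u).symm
  rw [hads]

/-- The subspace of elements with zero constant term, as a property. -/
lemma D_mul (b w : MonoidAlgebra k (FreeMonoid X)) (hw : w.coeff 1 = 0) :
    D k X (b * w) = τ k X b (D k X w) := by
  have hspan : w ∈ Submodule.span k {g : MonoidAlgebra k (FreeMonoid X) |
      ∃ v : FreeMonoid X, v ≠ 1 ∧ ∃ d : k, g = MonoidAlgebra.single v d} := by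
    have := MonoidAlgebra.sum_coeff_single w
    rw [← this]
    refine Submodule.sum_mem _ fun v hv => Submodule.subset_span ?_
    refine ⟨v, ?_, w.coeff v, rfl⟩
    rintro rfl
    exact Finsupp.mem_support_iff.mp hv hw
  clear hw
  induction hspan using Submodule.span_induction with
  | mem g hg =>
    obtain ⟨v, hv1, d, rfl⟩ := hg
    have hvl : v.toList ≠ [] := by
      intro hc
      exact hv1 (FreeMonoid.toList.injective (by simpa using hc))
    induction b using MonoidAlgebra.induction_linear with
    | zero => simp
    | add f g hf hg => rw [add_mul, map_add, map_add, hf, hg, LinearMap.add_apply]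
    | single u c => exact D_single_mul_single k X u v c d hvl
  | zero => simp
  | add g h _ _ ihg ihh => rw [mul_add, map_add, map_add, ihg, ihh, map_add]
  | smul c g _ ihg => rw [mul_smul_comm, map_smul, map_smul, ihg, LinearMap.map_smul]

/-- `IsBr n y` : `y` is an `n`-fold bracket of generators. -/
inductive IsBr : ℕ → FreeLieAlgebra k X → Prop
  | of (x : X) : IsBr 1 (of k x)
  | lie {i j : ℕ} {a b : FreeLieAlgebra k X} : IsBr i a → IsBr j b → IsBr (i + j) ⁅a, b⁆

variable {k X} in
lemma IsBr.one_le {n : ℕ} {y : FreeLieAlgebra k X} (h : IsBr k X n y) : 1 ≤ n := by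
  induction h with
  | of x => exact le_refl 1
  | lie ha hb iha ihb => exact le_trans iha (Nat.le_add_right _ _)

/-- The canonical Lie algebra map to the monoid algebra. -/
def Φ : FreeLieAlgebra k X →ₗ⁅k⁆ MonoidAlgebra k (FreeMonoid X) :=
  ((FreeAlgebra.equivMonoidAlgebraFreeMonoid (R := k) (X := X)).toAlgHom.toLieHom).comp
    (lift k fun x => FreeAlgebra.ι k x)

lemma Φ_apply (y : FreeLieAlgebra k X) :
    Φ k X y = FreeAlgebra.equivMonoidAlgebraFreeMonoid (R := k) (X := X)
      ((lift k fun x => FreeAlgebra.ι k x) y) :=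
  rfl

lemma Φ_of (x : X) : Φ k X (of k x) = MonoidAlgebra.single (FreeMonoid.of x) 1 := by
  rw [Φ_apply, lift_of_apply]
  rw [FreeAlgebra.equivMonoidAlgebraFreeMonoid]
  simp [MonoidAlgebra.of_apply]

lemma τ_Φ (a : FreeLieAlgebra k X) :
    τ k X (Φ k X a) = LieAlgebra.ad k (FreeLieAlgebra k X) a := by
  have h : ((τ k X).toLieHom.comp (Φ k X)) = LieAlgebra.ad k (FreeLieAlgebra k X) := by
    apply hom_ext
    intro x
    rw [LieHom.comp_apply, AlgHom.toLieHom_apply, Φ_of, τ_single, one_smul, ads,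
      FreeMonoid.lift_eval_of]
  exact DFunLike.congr_fun h a

/-- The grade-`m` subspace of the monoid algebra. -/
def Agrade (m : ℕ) : Submodule k (MonoidAlgebra k (FreeMonoid X)) where
  carrier := { f | ∀ w ∈ f.coeff.support, w.toList.length = m }
  add_mem' := by
    classical
    intro a b ha hb w hw
    rcases Finset.mem_union.mp (Finsupp.support_add hw) with h | h
    exacts [ha w h, hb w h]
  zero_mem' := by intro w hw; simp at hw
  smul_mem' := by intro c f hf w hw; exact hf w (Finsupp.support_smul hw)

variable {k X} in
lemma Agrade_mul {m n : ℕ} {a b : MonoidAlgebra k (FreeMonoid X)}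
    (ha : a ∈ Agrade k X m) (hb : b ∈ Agrade k X n) : a * b ∈ Agrade k X (m + n) := by
  classical
  intro w hw
  rcases Finset.mem_mul.mp (MonoidAlgebra.support_coeff_mul_subset a b hw) with ⟨u, hu, v, hv, rfl⟩
  rw [FreeMonoid.toList_mul, List.length_append, ha u hu, hb v hv]

variable {k X} in
lemma Φ_mem_Agrade {n : ℕ} {y : FreeLieAlgebra k X} (h : IsBr k X n y) :
    Φ k X y ∈ Agrade k X n := by
  induction h with
  | of x =>
    intro w hw
    rw [Φ_of] at hw
    have := Finsupp.support_single_subset hw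
    simp only [Finset.mem_singleton] at this
    subst this
    simp [FreeMonoid.toList_of]
  | lie ha hb iha ihb =>
    rw [LieHom.map_lie, Ring.lie_def]
    refine sub_mem (Agrade_mul iha ihb) ?_
    rw [add_comm]
    exact Agrade_mul ihb iha

variable {k X} in
lemma apply_one_of_Agrade {n : ℕ} {f : MonoidAlgebra k (FreeMonoid X)}
    (hf : f ∈ Agrade k X n) (hn : 1 ≤ n) : f.coeff 1 = 0 := by
  by_contra hc
  have h1 : (1 : FreeMonoid X) ∈ f.coeff.support := Finsupp.mem_support_iff.mpr hc
  have := hf 1 h1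
  rw [FreeMonoid.toList_one] at this
  simp at this
  omega

variable {k X} in
/-- Dynkin–Specht–Wever. -/
lemma D_Φ {n : ℕ} {y : FreeLieAlgebra k X} (h : IsBr k X n y) :
    D k X (Φ k X y) = (n : k) • y := by
  induction h with
  | of x =>
    rw [Φ_of, D_single, FreeMonoid.toList_of]
    simp [d0]
  | @lie i j a b ha hb iha ihb =>
    have hΦa : (Φ k X a).coeff 1 = 0 := apply_one_of_Agrade (Φ_mem_Agrade ha) ha.one_le
    have hΦb : (Φ k X b).coeff 1 = 0 := apply_one_of_Agrade (Φ_mem_Agrade hb) hb.one_le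
    rw [LieHom.map_lie, Ring.lie_def, map_sub, D_mul _ _ _ _ hΦb, D_mul _ _ _ _ hΦa,
      τ_Φ, τ_Φ, iha, ihb, LinearMap.map_smul, LinearMap.map_smul,
      LieAlgebra.ad_apply, LieAlgebra.ad_apply]
    rw [← lie_skew b a]
    push_cast
    rw [add_smul]
    rw [smul_neg, sub_neg_eq_add, add_comm]

/-- The span of `n`-fold brackets. -/
def Lsub (m : ℕ) : Submodule k (FreeLieAlgebra k X) :=
  Submodule.span k { y | IsBr k X m y }

variable {k X} in
lemma lie_mem_iSup_Lsub {a b : FreeLieAlgebra k X}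
    (ha : a ∈ ⨆ m, Lsub k X m) (hb : b ∈ ⨆ m, Lsub k X m) :
    ⁅a, b⁆ ∈ ⨆ m, Lsub k X m := by
  refine Submodule.iSup_induction (motive := fun a => ∀ b, b ∈ (⨆ m, Lsub k X m) →
    ⁅a, b⁆ ∈ ⨆ m, Lsub k X m) (Lsub k X) ha ?_ ?_ ?_ b hb
  · intro i a ha
    induction ha using Submodule.span_induction with
    | mem y hy =>
      intro b hb
      refine Submodule.iSup_induction (motive := fun b => ⁅y, b⁆ ∈ ⨆ m, Lsub k X m)
        (Lsub k X) hb ?_ ?_ ?_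
      · intro j b hbj
        induction hbj using Submodule.span_induction with
        | mem z hz =>
          exact Submodule.mem_iSup_of_mem (i + j) (Submodule.subset_span (IsBr.lie hy hz))
        | zero => simp
        | add u v _ _ ihu ihv =>
          rw [lie_add]
          exact Submodule.add_mem _ ihu ihv
        | smul c u _ ihu =>
          rw [lie_smul]
          exact Submodule.smul_mem _ _ ihu
      · simp
      · intro u v ihu ihv
        rw [lie_add]
        exact Submodule.add_mem _ ihu ihv
    | zero => intro b _; simp
    | add u v _ _ ihu ihv =>
      intro b hb
      rw [add_lie]
      exact Submodule.add_mem _ (ihu b hb) (ihv b hb)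
    | smul c u _ ihu =>
      intro b hb
      rw [smul_lie]
      exact Submodule.smul_mem _ _ (ihu b hb)
  · intro b _; simp
  · intro u v ihu ihv b hb
    rw [add_lie]
    exact Submodule.add_mem _ (ihu b hb) (ihv b hb)

/-- The homogeneous pieces span, packaged as a Lie subalgebra. -/
def Ksub : LieSubalgebra k (FreeLieAlgebra k X) :=
  { (⨆ m, Lsub k X m : Submodule k (FreeLieAlgebra k X)) with
    lie_mem' := fun ha hb => lie_mem_iSup_Lsub ha hb }

lemma mem_iSup_Lsub (y : FreeLieAlgebra k X) : y ∈ ⨆ m, Lsub k X m := by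
  have h1 : ∀ x : X, of k x ∈ Ksub k X := fun x =>
    Submodule.mem_iSup_of_mem 1 (Submodule.subset_span (IsBr.of x))
  let ψ : FreeLieAlgebra k X →ₗ⁅k⁆ Ksub k X := lift k fun x => ⟨of k x, h1 x⟩
  have hcomp : (Ksub k X).incl.comp ψ = LieHom.id := by
    apply hom_ext
    intro x
    rw [LieHom.comp_apply]
    show ((ψ (of k x) : Ksub k X) : FreeLieAlgebra k X) = of k x
    rw [show ψ (of k x) = ⟨of k x, h1 x⟩ from lift_of_apply ..]
  have := DFunLike.congr_fun hcomp y
  rw [LieHom.comp_apply, LieHom.id_apply] at this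
  rw [← this]
  exact (ψ y).2

variable {k X} in
lemma Lsub_le_comap_Agrade (m : ℕ) :
    Lsub k X m ≤ (Agrade k X m).comap (Φ k X).toLinearMap :=
  Submodule.span_le.mpr fun y hy => Φ_mem_Agrade hy

variable {k X} in
lemma D_Φ_of_mem_Lsub {m : ℕ} {z : FreeLieAlgebra k X} (hz : z ∈ Lsub k X m) :
    D k X (Φ k X z) = (m : k) • z := by
  have := LinearMap.eqOn_span (R := k)
    (f := (D k X).comp (Φ k X).toLinearMap) (g := (m : k) • LinearMap.id)
    (s := { y | IsBr k X m y }) (fun y hy => by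
      simp only [LinearMap.comp_apply, LinearMap.smul_apply, LinearMap.id_apply]
      exact D_Φ hy) hz
  simpa using this

theorem Φ_injective [CharZero k] : Function.Injective (Φ k X) := by
  suffices h : ∀ y, Φ k X y = 0 → y = 0 by
    intro a b hab
    have : Φ k X (a - b) = 0 := by rw [map_sub (Φ k X), hab, sub_self]
    exact sub_eq_zero.mp (h _ this)
  intro y hy
  obtain ⟨g, hg, hsum⟩ := (Submodule.mem_iSup_iff_exists_finsupp (Lsub k X) y).mp
    (mem_iSup_Lsub k X y)
  have hΦg : ∀ m, Φ k X (g m) ∈ Agrade k X m := fun m => Lsub_le_comap_Agrade m (hg m)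
  have hΦsum : (Finset.sum g.support fun m => Φ k X (g m)) = 0 := by
    have : Φ k X (g.sum fun _ x => x) = 0 := by rw [hsum, hy]
    rw [Finsupp.sum] at this
    rw [← this]
    exact (map_sum (Φ k X).toLinearMap _ _).symm
  have hΦgm : ∀ m, Φ k X (g m) = 0 := by
    intro m
    by_cases hm : m ∈ g.support
    · ext w
      by_cases hw : w.toList.length = m
      · have h0 : (Finset.sum g.support fun m' => Φ k X (g m')).coeff w = 0 := by rw [hΦsum]; rfl
        rw [MonoidAlgebra.coeff_sum, Finsupp.finset_sum_apply] at h0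
        rw [Finset.sum_eq_single m (fun m' _ hne => ?_) (fun hc => absurd hm hc)] at h0
        · exact h0
        · by_contra hc
          have hsupp : w ∈ (Φ k X (g m')).coeff.support := Finsupp.mem_support_iff.mpr hc
          exact hne (by rw [← hΦg m' w hsupp, hw])
      · exact Finsupp.notMem_support_iff.mp fun hsup => hw (hΦg m w hsup)
    · rw [Finsupp.notMem_support_iff.mp hm, map_zero (Φ k X)]
  have hgm : ∀ m, g m = 0 := by
    intro m
    rcases Nat.eq_zero_or_pos m with rfl | hm
    · have h0 : Lsub k X 0 = ⊥ := by
        rw [Lsub, show { y | IsBr k X 0 y } = (∅ : Set (FreeLieAlgebra k X)) from ?_,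
          Submodule.span_empty]
        ext y
        simp only [Set.mem_setOf_eq, Set.mem_empty_iff_false, iff_false]
        intro hc
        exact absurd hc.one_le (by omega)
      have := hg 0
      rw [h0, Submodule.mem_bot] at this
      exact this
    · have hD := D_Φ_of_mem_Lsub (hg m)
      rw [hΦgm m, map_zero] at hD
      have hm0 : (m : k) ≠ 0 := Nat.cast_ne_zero.mpr (by omega)
      exact (smul_eq_zero_iff_right hm0).mp hD.symm
  rw [← hsum, Finsupp.sum]
  exact Finset.sum_eq_zero fun m _ => hgm m

theorem lift_ι_injective [CharZero k] :
    Function.Injective (FreeLieAlgebra.lift k (fun x => FreeAlgebra.ι k x) :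
      FreeLieAlgebra k X →ₗ⁅k⁆ FreeAlgebra k X) := by
  intro a b h
  apply Φ_injective k X
  rw [Φ_apply, Φ_apply, h]


section Main

variable (k : Type) [Field k] (n : ℕ) (hn : 1 ≤ n)

/-- The canonical map. -/
def φM : FreeLieAlgebra k (Fin 2 ⊕ Fin n) →ₗ⁅k⁆ FreeAlgebra k (Fin 2 ⊕ Fin n) :=
  lift k fun i => FreeAlgebra.ι k i

lemma φM_of (i : Fin 2 ⊕ Fin n) : φM k n (of k i) = FreeAlgebra.ι k i :=
  lift_of_apply _ i

/-- The Lie ideal. -/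
def IM : LieIdeal k (FreeLieAlgebra k (Fin 2 ⊕ Fin n)) :=
  LieSubmodule.lieSpan k (FreeLieAlgebra k (Fin 2 ⊕ Fin n))
    {⁅of k (Sum.inl (0 : Fin 2) : Fin 2 ⊕ Fin n), of k (Sum.inl (1 : Fin 2) : Fin 2 ⊕ Fin n)⁆ - of k (Sum.inr (⟨0, hn⟩ : Fin n) : Fin 2 ⊕ Fin n)}

/-- The two-sided ideal. -/
def JM : TwoSidedIdeal (FreeAlgebra k (Fin 2 ⊕ Fin n)) :=
  TwoSidedIdeal.span
    {FreeAlgebra.ι k (Sum.inl (0 : Fin 2)) * FreeAlgebra.ι k (Sum.inl (1 : Fin 2)) -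
      FreeAlgebra.ι k (Sum.inl (1 : Fin 2)) * FreeAlgebra.ι k (Sum.inl (0 : Fin 2)) -
      FreeAlgebra.ι k (Sum.inr (⟨0, hn⟩ : Fin n))}

theorem part1 : ∀ y ∈ IM k n hn, φM k n y ∈ JM k n hn := by
  intro y hy
  let N : LieIdeal k (FreeLieAlgebra k (Fin 2 ⊕ Fin n)) :=
    { carrier := { z | φM k n z ∈ JM k n hn }
      add_mem' := fun {a b} ha hb => by
        simp only [Set.mem_setOf_eq] at ha hb ⊢
        rw [map_add (φM k n)]
        exact (JM k n hn).add_mem ha hb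
      zero_mem' := by
        simp only [Set.mem_setOf_eq, (φM k n).map_zero]
        exact (JM k n hn).zero_mem
      smul_mem' := fun c z hz => by
        simp only [Set.mem_setOf_eq] at hz ⊢
        rw [map_smul (φM k n), Algebra.smul_def]
        exact (JM k n hn).mul_mem_left _ _ hz
      lie_mem := fun {x m} hm => by
        simp only [Set.mem_setOf_eq] at hm ⊢
        rw [(φM k n).map_lie, Ring.lie_def]
        exact (JM k n hn).sub_mem ((JM k n hn).mul_mem_left _ _ hm)
          ((JM k n hn).mul_mem_right _ _ hm) }
  have hIN : IM k n hn ≤ N := by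
    rw [IM, LieSubmodule.lieSpan_le]
    intro z hz
    rw [Set.mem_singleton_iff] at hz
    subst hz
    show φM k n _ ∈ JM k n hn
    rw [map_sub (φM k n), (φM k n).map_lie, Ring.lie_def, φM_of, φM_of, φM_of]
    exact TwoSidedIdeal.subset_span rfl
  exact hIN hy

theorem key [CharZero k] : ∀ w, φM k n w ∈ JM k n hn → w ∈ IM k n hn := by
  classical
  intro w hw
  set gA : Fin 2 ⊕ Fin n → FreeLieAlgebra k (Fin 2 ⊕ Fin n) := fun i =>
    if i = Sum.inr (⟨0, hn⟩ : Fin n) then ⁅of k (Sum.inl (0 : Fin 2) : Fin 2 ⊕ Fin n), of k (Sum.inl (1 : Fin 2) : Fin 2 ⊕ Fin n)⁆ else of k i with hgA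
  set α : FreeLieAlgebra k (Fin 2 ⊕ Fin n) →ₗ⁅k⁆ FreeLieAlgebra k (Fin 2 ⊕ Fin n) :=
    lift k gA with hα
  set gB : Fin 2 ⊕ Fin n → FreeAlgebra k (Fin 2 ⊕ Fin n) := fun i =>
    if i = Sum.inr (⟨0, hn⟩ : Fin n) then
      FreeAlgebra.ι k (Sum.inl (0 : Fin 2)) * FreeAlgebra.ι k (Sum.inl (1 : Fin 2)) -
        FreeAlgebra.ι k (Sum.inl (1 : Fin 2)) * FreeAlgebra.ι k (Sum.inl (0 : Fin 2))
    else FreeAlgebra.ι k i with hgB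
  set β : FreeAlgebra k (Fin 2 ⊕ Fin n) →ₐ[k] FreeAlgebra k (Fin 2 ⊕ Fin n) :=
    FreeAlgebra.lift k gB with hβ
  have hinl : ∀ j : Fin 2, (Sum.inl j : Fin 2 ⊕ Fin n) ≠ Sum.inr (⟨0, hn⟩ : Fin n) := by
    intro j hc
    exact absurd hc (by simp)
  have hβφ : ∀ y, β (φM k n y) = φM k n (α y) := by
    have hc : (β.toLieHom.comp (φM k n)) = (φM k n).comp α := by
      apply hom_ext
      intro i
      rw [LieHom.comp_apply, LieHom.comp_apply, AlgHom.toLieHom_apply, φM_of,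
        hβ, FreeAlgebra.lift_ι_apply, hα, lift_of_apply]
      by_cases hi : i = Sum.inr (⟨0, hn⟩ : Fin n)
      · subst hi
        simp only [hgA, hgB, if_pos rfl]
        rw [(φM k n).map_lie, Ring.lie_def, φM_of, φM_of]
      · simp only [hgA, hgB, if_neg hi, φM_of]
    exact fun y => DFunLike.congr_fun hc y
  have hβJ : ∀ b ∈ JM k n hn, β b = 0 := by
    intro b hb
    have hgen : β (FreeAlgebra.ι k (Sum.inl (0 : Fin 2)) * FreeAlgebra.ι k (Sum.inl (1 : Fin 2)) -
        FreeAlgebra.ι k (Sum.inl (1 : Fin 2)) * FreeAlgebra.ι k (Sum.inl (0 : Fin 2)) -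
        FreeAlgebra.ι k (Sum.inr (⟨0, hn⟩ : Fin n))) = 0 := by
      rw [map_sub, map_sub, map_mul, map_mul, hβ, FreeAlgebra.lift_ι_apply,
        FreeAlgebra.lift_ι_apply, FreeAlgebra.lift_ι_apply]
      simp only [hgB, if_neg (hinl 0), if_neg (hinl 1), if_pos rfl]
      exact sub_self _
    have hmem := TwoSidedIdeal.mem_span_iff.mp hb (TwoSidedIdeal.ker β) ?_
    · exact (TwoSidedIdeal.mem_ker β).mp hmem
    · intro z hz
      rw [Set.mem_singleton_iff] at hz
      subst hz
      exact (TwoSidedIdeal.mem_ker β).mpr hgen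
  let mkI : FreeLieAlgebra k (Fin 2 ⊕ Fin n) →ₗ⁅k⁆
      (FreeLieAlgebra k (Fin 2 ⊕ Fin n) ⧸ IM k n hn) :=
    { (IM k n hn).toSubmodule.mkQ with map_lie' := fun {x y} => rfl }
  have halpha : ∀ y, y - α y ∈ IM k n hn := by
    have hc : mkI.comp α = mkI := by
      apply hom_ext
      intro i
      rw [LieHom.comp_apply, hα, lift_of_apply]
      by_cases hi : i = Sum.inr (⟨0, hn⟩ : Fin n)
      · subst hi
        simp only [hgA, if_pos rfl]
        have hmem : (⁅of k (Sum.inl (0 : Fin 2) : Fin 2 ⊕ Fin n), of k (Sum.inl (1 : Fin 2) : Fin 2 ⊕ Fin n)⁆ -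
            of k (Sum.inr (⟨0, hn⟩ : Fin n) : Fin 2 ⊕ Fin n) : FreeLieAlgebra k (Fin 2 ⊕ Fin n)) ∈ IM k n hn :=
          LieSubmodule.subset_lieSpan rfl
        show Submodule.Quotient.mk _ = Submodule.Quotient.mk _
        exact (Submodule.Quotient.eq _).mpr hmem
      · simp only [hgA, if_neg hi]
    intro y
    have h1 := DFunLike.congr_fun hc y
    rw [LieHom.comp_apply] at h1
    have h2 : Submodule.Quotient.mk (p := (IM k n hn).toSubmodule) y =
        Submodule.Quotient.mk (α y) := h1.symm
    exact (Submodule.Quotient.eq _).mp h2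
  have hφα : φM k n (α w) = 0 := by rw [← hβφ w]; exact hβJ _ hw
  have hα0 : α w = 0 := by
    have h0 : φM k n (α w) = φM k n 0 := by rw [hφα, map_zero (φM k n)]
    exact lift_ι_injective k (Fin 2 ⊕ Fin n) h0
  have hfin := halpha w
  rw [hα0, sub_zero] at hfin
  exact hfin

end Main

end DSWAux

end

/-- Let `φ` be the canonical Lie algebra map from the free Lie algebra `L` on
`u, v, x₀, …, x_{n-1}` to the free associative algebra `B` on the same generators (with the
commutator bracket), let `I` be the Lie ideal of `L` generated by `⁅u, v⁆ - x₀`, and let `J`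
be the two-sided ideal of `B` generated by `u*v - v*u - x₀`.  Then `φ` maps `I` into `J`,
and the induced map `L ⧸ I → B ⧸ J` is injective. -/
theorem induced_map_of_quotients_injective
    (k : Type) [Field k] [CharZero k] (n : ℕ) (hn : 1 ≤ n) :
    let uL : FreeLieAlgebra k (Fin 2 ⊕ Fin n) := FreeLieAlgebra.of k (Sum.inl 0)
    let vL : FreeLieAlgebra k (Fin 2 ⊕ Fin n) := FreeLieAlgebra.of k (Sum.inl 1)
    let xL : FreeLieAlgebra k (Fin 2 ⊕ Fin n) := FreeLieAlgebra.of k (Sum.inr ⟨0, hn⟩)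
    let uB : FreeAlgebra k (Fin 2 ⊕ Fin n) := FreeAlgebra.ι k (Sum.inl 0)
    let vB : FreeAlgebra k (Fin 2 ⊕ Fin n) := FreeAlgebra.ι k (Sum.inl 1)
    let xB : FreeAlgebra k (Fin 2 ⊕ Fin n) := FreeAlgebra.ι k (Sum.inr ⟨0, hn⟩)
    let φ : FreeLieAlgebra k (Fin 2 ⊕ Fin n) →ₗ⁅k⁆ FreeAlgebra k (Fin 2 ⊕ Fin n) :=
      FreeLieAlgebra.lift k fun i => FreeAlgebra.ι k i
    let I : LieIdeal k (FreeLieAlgebra k (Fin 2 ⊕ Fin n)) :=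
      LieSubmodule.lieSpan k (FreeLieAlgebra k (Fin 2 ⊕ Fin n)) {⁅uL, vL⁆ - xL}
    let J : TwoSidedIdeal (FreeAlgebra k (Fin 2 ⊕ Fin n)) :=
      TwoSidedIdeal.span {uB * vB - vB * uB - xB}
    let π : FreeAlgebra k (Fin 2 ⊕ Fin n) →+* J.ringCon.Quotient := J.ringCon.mk'
    -- `φ` maps `I` into `J` …
    (∀ y ∈ I, φ y ∈ J) ∧
      -- … and the induced map `L ⧸ I → B ⧸ J` (the unique map commuting with the two
      -- quotient projections and `φ`) is injective.
      ∀ f : (FreeLieAlgebra k (Fin 2 ⊕ Fin n) ⧸ I) → J.ringCon.Quotient,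
        (∀ y : FreeLieAlgebra k (Fin 2 ⊕ Fin n),
            f (LieSubmodule.Quotient.mk (N := I) y) = π (φ y)) →
        Function.Injective f := by
  intro uL vL xL uB vB xB φ I J π
  constructor
  · exact fun y hy => DSWAux.part1 k n hn y hy
  · intro f hf a b hab
    have hsurj : ∀ c : FreeLieAlgebra k (Fin 2 ⊕ Fin n) ⧸ I,
        ∃ y, LieSubmodule.Quotient.mk (N := I) y = c := fun c =>
      Quotient.inductionOn' c fun y => ⟨y, rfl⟩
    obtain ⟨y, hy⟩ := hsurj a
    obtain ⟨z, hz⟩ := hsurj b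
    have h1 := hf y
    have h2 := hf z
    rw [hy] at h1
    rw [hz] at h2
    have h3 : π (φ y) = π (φ z) := by rw [← h1, ← h2, hab]
    have h4 : J.ringCon (φ y) (φ z) := J.ringCon.eq.mp h3
    have h5 : φ y - φ z ∈ J := ((J.rel_iff _ _).mp h4)
    have h6 : φ (y - z) ∈ J := by rw [map_sub φ]; exact h5
    have h7 : y - z ∈ I := DSWAux.key k n hn (y - z) h6
    rw [← hy, ← hz]
    exact (Submodule.Quotient.eq _).mpr h7
end
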